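/- arXiv:0805.2641 — 8 statements merged into one kernel-verified Lean document; each statement's English description precedes it below -/
import Mathlib

section
/- Let a, b, α, β be positive reals with α·β ≤ 1. Then a·b·α·(1 + β)/(α·a + b) = a·b·β·(α + 1)/(β·b + a) if and only if α·a = β·b or α·β = 1. -/
/-! The cross-multiplied difference of the two rates factors as
`a b (1 - α β) (α a - β b)`, so with `a, b > 0` it vanishes exactly when `α β = 1` or `α a = β b`. -/

theorem successive_rates_cross_sub (a b α β : ℝ) :
    a * b * α * (1 + β) * (β * b + a) - a * b * β * (α + 1) * (α * a + b) =
      a * b * ((1 - α * β) * (α * a - β * b)) := by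
  ring

theorem diamond_R1_eq_R2_case2_general (a b α β : ℝ)
    (ha : 0 < a) (hb : 0 < b) (hα : 0 < α) (hβ : 0 < β) :
    a * b * α * (1 + β) / (α * a + b) = a * b * β * (α + 1) / (β * b + a) ↔
      α * a = β * b ∨ α * β = 1 := by
  have hden₁ : α * a + b ≠ 0 := by positivity
  have hden₂ : β * b + a ≠ 0 := by positivity
  rw [div_eq_div_iff hden₁ hden₂, ← sub_eq_zero, successive_rates_cross_sub]
  simp only [mul_eq_zero, ha.ne', hb.ne', false_or, sub_eq_zero]
  rw [eq_comm (a := (1 : ℝ)), or_comm]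

/-- For positive a, b, α, β with α·β ≤ 1,
a·b·α·(1 + β)/(α·a + b) = a·b·β·(α + 1)/(β·b + a) iff α·a = β·b or α·β = 1. -/
theorem diamond_R1_eq_R2_case2 (a b α β : ℝ)
    (ha : 0 < a) (hb : 0 < b) (hα : 0 < α) (hβ : 0 < β) (hαβ : α * β ≤ 1) :
    a * b * α * (1 + β) / (α * a + b) = a * b * β * (α + 1) / (β * b + a) ↔
      α * a = β * b ∨ α * β = 1 :=
  diamond_R1_eq_R2_case2_general a b α β ha hb hα hβ
end

section
/- Let C01, C02, C13, C23 be positive reals and define R1 = (C01·C13 + min(C13·C23, C01·C02))/(C13 + C01) and R2 = (C02·C23 + min(C13·C23, C01·C02))/(C23 + C02). Then R1 = R2 if and only if at least one of the following holds: (i) C01·C02 = C13·C23; (ii) C01 = C02 and C01·C02 ≤ C13·C23; (iii) C13 = C23 and C01·C02 ≥ C13·C23. -/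
/-!
Cross-multiplying, with `m` the common min-term, `R1 = R2` becomes
`(C01 - C02) (C13 C23 - m) + (C13 - C23) (C01 C02 - m) = 0`.
Whichever product realises the min, one summand vanishes and the other is a product of
two factors, one of which is `C01 C02 - C13 C23`.
-/

theorem successive_relaying_cross_identity {R : Type*} [CommRing R] (a b c d m : R) :
    (a * c + m) * (d + b) - (b * d + m) * (c + a) =
      (a - b) * (c * d - m) + (c - d) * (a * b - m) := by
  ring

section LinearOrder

variable {K : Type*} [Field K] [LinearOrder K] [IsStrictOrderedRing K]

theorem sub_mul_sub_min_add_sub_mul_sub_min_eq_zero_iff (a b c d : K) :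
    (a - b) * (c * d - min (c * d) (a * b)) + (c - d) * (a * b - min (c * d) (a * b)) = 0 ↔
      a * b = c * d ∨ (a = b ∧ a * b ≤ c * d) ∨ (c = d ∧ c * d ≤ a * b) := by
  rcases le_total (c * d) (a * b) with h | h
  · rw [min_eq_left h, sub_self, mul_zero, zero_add, mul_eq_zero, sub_eq_zero, sub_eq_zero]
    constructor
    · rintro (hcd | hab)
      · exact Or.inr (Or.inr ⟨hcd, h⟩)
      · exact Or.inl hab
    · rintro (hab | ⟨-, h'⟩ | ⟨hcd, -⟩)
      · exact Or.inr hab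
      · exact Or.inr (le_antisymm h' h)
      · exact Or.inl hcd
  · rw [min_eq_right h, sub_self, mul_zero, add_zero, mul_eq_zero, sub_eq_zero, sub_eq_zero]
    constructor
    · rintro (hab | hcd)
      · exact Or.inr (Or.inl ⟨hab, h⟩)
      · exact Or.inl hcd.symm
    · rintro (hab | ⟨hab, -⟩ | ⟨-, h'⟩)
      · exact Or.inr hab.symm
      · exact Or.inl hab
      · exact Or.inr (le_antisymm h h').symm

end LinearOrder

/-- Lemma 1: R1 = R2 iff (i) C01·C02 = C13·C23, or
(ii) C01 = C02 and C01·C02 ≤ C13·C23, or (iii) C13 = C23 and C01·C02 ≥ C13·C23. -/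
theorem diamond_R1_eq_R2_characterization (C01 C02 C13 C23 : ℝ)
    (h01 : 0 < C01) (h02 : 0 < C02) (h13 : 0 < C13) (h23 : 0 < C23) :
    (C01 * C13 + min (C13 * C23) (C01 * C02)) / (C13 + C01) =
      (C02 * C23 + min (C13 * C23) (C01 * C02)) / (C23 + C02) ↔
    (C01 * C02 = C13 * C23 ∨
      (C01 = C02 ∧ C01 * C02 ≤ C13 * C23) ∨
      (C13 = C23 ∧ C13 * C23 ≤ C01 * C02)) := by
  rw [div_eq_div_iff (by positivity) (by positivity), ← sub_eq_zero,
    successive_relaying_cross_identity]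
  exact sub_mul_sub_min_add_sub_mul_sub_min_eq_zero_iff C01 C02 C13 C23
end

section
/- Let a, b, α, β be positive reals with α·β = 1, and let t* = (t1*, t2*, t3*, t4*) = (0, b/(α·a + b), a/(a + β·b), 0). Then t1* + t2* + t3* + t4* = 1, and the cut rates R_C2(t*) = t1*·a + t2*·(a + α·a) + t4*·α·a and R_C3(t*) = t1*·b + t3*·(b + β·b) + t4*·β·b are both equal to a·b·(1 + α)/(α·a + b). -/
section Field

variable {K : Type*} [Field K] {α β : K}

theorem div_add_mul_eq_mul_div_mul_add_of_mul_eq_one (h : α * β = 1) (a b : K) :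
    a / (a + β * b) = α * a / (α * a + b) := by
  have hden : a + β * b = β * (α * a + b) := by linear_combination (-a) * h
  rw [hden, ← div_div, div_eq_mul_inv a β, ← eq_inv_of_mul_eq_one_left h, mul_comm a α]

theorem div_add_mul_mul_add_mul_eq_of_mul_eq_one (h : α * β = 1) (a b : K) :
    a / (a + β * b) * (b + β * b) = a * b * (1 + α) / (α * a + b) := by
  rw [div_add_mul_eq_mul_div_mul_add_of_mul_eq_one h, div_mul_eq_mul_div]
  congr 1
  linear_combination (a * b) * h

end Field

theorem diamond_cut_rates_at_tstar_general (a b α β : ℝ)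
    (ha : 0 < a) (hb : 0 < b) (hα : 0 < α) (hαβ : α * β = 1) :
    let t1 : ℝ := 0
    let t2 : ℝ := b / (α * a + b)
    let t3 : ℝ := a / (a + β * b)
    let t4 : ℝ := 0
    t1 + t2 + t3 + t4 = 1 ∧
    t1 * a + t2 * (a + α * a) + t4 * (α * a) = a * b * (1 + α) / (α * a + b) ∧
    t1 * b + t3 * (b + β * b) + t4 * (β * b) = a * b * (1 + α) / (α * a + b) := by
  intro t1 t2 t3 t4
  have hden : α * a + b ≠ 0 := by positivity
  refine ⟨?_, ?_, ?_⟩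
  · show 0 + b / (α * a + b) + a / (a + β * b) + 0 = 1
    rw [div_add_mul_eq_mul_div_mul_add_of_mul_eq_one hαβ, zero_add, add_zero, ← add_div,
      add_comm b, div_self hden]
  · show 0 * a + b / (α * a + b) * (a + α * a) + 0 * (α * a) = a * b * (1 + α) / (α * a + b)
    ring
  · show 0 * b + a / (a + β * b) * (b + β * b) + 0 * (β * b) = a * b * (1 + α) / (α * a + b)
    rw [zero_mul, zero_mul, zero_add, add_zero, div_add_mul_mul_add_mul_eq_of_mul_eq_one hαβ]

/-- Lemma 4: At t* = (0, b/(α·a + b), a/(a + β·b), 0) with α·β = 1,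
the entries sum to 1 and the cut rates of cuts 2 and 3 both equal a·b·(1 + α)/(α·a + b). -/
theorem diamond_cut_rates_at_tstar (a b α β : ℝ)
    (ha : 0 < a) (hb : 0 < b) (hα : 0 < α) (hβ : 0 < β) (hαβ : α * β = 1) :
    let t1 : ℝ := 0
    let t2 : ℝ := b / (α * a + b)
    let t3 : ℝ := a / (a + β * b)
    let t4 : ℝ := 0
    t1 + t2 + t3 + t4 = 1 ∧
    t1 * a + t2 * (a + α * a) + t4 * (α * a) = a * b * (1 + α) / (α * a + b) ∧
    t1 * b + t3 * (b + β * b) + t4 * (β * b) = a * b * (1 + α) / (α * a + b) :=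
  diamond_cut_rates_at_tstar_general a b α β ha hb hα hαβ
end

section
/- Let a, b, α, β be positive reals with α·β = 1. For every time-sharing vector t = (t1, t2, t3, t4) with ti ≥ 0 and t1 + t2 + t3 + t4 = 1, one has min(R_C2(t), R_C3(t)) ≤ a·b·(1 + α)/(α·a + b), where R_C2(t) = t1·a + t2·(a + α·a) + t4·α·a and R_C3(t) = t1·b + t3·(b + β·b) + t4·β·b. Moreover, equality is attained at t* = (0, b/(α·a + b), a/(a + β·b), 0). -/
/-! The weights `b` and `α·a` make the combination `b·R_C2(t) + α·a·R_C3(t)` equal to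
`a·b·(1 + α)·(t1 + t2 + t3 + t4)` once `α·β = 1`, so it is constant on the simplex; the minimum of
the two cuts is at most their weighted average, and at `t*` both cuts already take that value. -/

theorem add_mul_min_le_mul_add_mul {R : Type*} [Semiring R] [LinearOrder R] [IsOrderedRing R]
    {p q : R} (x y : R) (hp : 0 ≤ p) (hq : 0 ≤ q) :
    (p + q) * min x y ≤ p * x + q * y := by
  rw [add_mul]
  exact add_le_add (mul_le_mul_of_nonneg_left (min_le_left x y) hp)
    (mul_le_mul_of_nonneg_left (min_le_right x y) hq)

section DiamondCuts

variable {a b α β : ℝ}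

theorem diamond_weighted_cut_sum (hαβ : α * β = 1) (t1 t2 t3 t4 : ℝ) :
    b * (t1 * a + t2 * (a + α * a) + t4 * (α * a)) +
        α * a * (t1 * b + t3 * (b + β * b) + t4 * (β * b)) =
      a * b * (1 + α) * (t1 + t2 + t3 + t4) := by
  linear_combination (t3 + t4) * a * b * hαβ

theorem diamond_cut_two_at_tstar :
    (0 : ℝ) * a + b / (α * a + b) * (a + α * a) + 0 * (α * a) =
      a * b * (1 + α) / (α * a + b) := by
  ring

theorem diamond_cut_three_at_tstar (hαβ : α * β = 1) :
    (0 : ℝ) * b + a / (a + β * b) * (b + β * b) + 0 * (β * b) =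
      a * b * (1 + α) / (α * a + b) := by
  have hβ : β ≠ 0 := right_ne_zero_of_mul_eq_one hαβ
  have hden : a + β * b = β * (α * a + b) := by linear_combination (-a) * hαβ
  have hnum : b + β * b = β * (b * (1 + α)) := by linear_combination (-b) * hαβ
  rw [hden, hnum, div_mul_eq_mul_div, mul_left_comm, mul_div_mul_left _ _ hβ]
  ring

end DiamondCuts

theorem diamond_tstar_maximizes_min_cut_general (a b α β : ℝ)
    (ha : 0 < a) (hb : 0 < b) (hα : 0 < α) (hαβ : α * β = 1) :
    (∀ t1 t2 t3 t4 : ℝ, 0 ≤ t1 → 0 ≤ t2 → 0 ≤ t3 → 0 ≤ t4 →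
      t1 + t2 + t3 + t4 = 1 →
      min (t1 * a + t2 * (a + α * a) + t4 * (α * a))
          (t1 * b + t3 * (b + β * b) + t4 * (β * b)) ≤
        a * b * (1 + α) / (α * a + b)) ∧
    min ((0 : ℝ) * a + b / (α * a + b) * (a + α * a) + 0 * (α * a))
        ((0 : ℝ) * b + a / (a + β * b) * (b + β * b) + 0 * (β * b)) =
      a * b * (1 + α) / (α * a + b) := by
  have hD : 0 < α * a + b := by positivity
  refine ⟨fun t1 t2 t3 t4 _ _ _ _ hsum => ?_, ?_⟩
  · rw [le_div_iff₀ hD, mul_comm, add_comm (α * a)]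
    calc (b + α * a) * min _ _
        ≤ b * (t1 * a + t2 * (a + α * a) + t4 * (α * a)) +
            α * a * (t1 * b + t3 * (b + β * b) + t4 * (β * b)) :=
          add_mul_min_le_mul_add_mul _ _ hb.le (by positivity)
      _ = a * b * (1 + α) := by rw [diamond_weighted_cut_sum hαβ, hsum, mul_one]
  · rw [diamond_cut_two_at_tstar, diamond_cut_three_at_tstar hαβ, min_self]

/-- Lemma 3: For α·β = 1, every time-sharing vector t in the simplex
satisfies min(R_C2(t), R_C3(t)) ≤ a·b·(1 + α)/(α·a + b), with equality at
t* = (0, b/(α·a + b), a/(a + β·b), 0). -/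
theorem diamond_tstar_maximizes_min_cut (a b α β : ℝ)
    (ha : 0 < a) (hb : 0 < b) (hα : 0 < α) (hβ : 0 < β) (hαβ : α * β = 1) :
    (∀ t1 t2 t3 t4 : ℝ, 0 ≤ t1 → 0 ≤ t2 → 0 ≤ t3 → 0 ≤ t4 →
      t1 + t2 + t3 + t4 = 1 →
      min (t1 * a + t2 * (a + α * a) + t4 * (α * a))
          (t1 * b + t3 * (b + β * b) + t4 * (β * b)) ≤
        a * b * (1 + α) / (α * a + b)) ∧
    min ((0 : ℝ) * a + b / (α * a + b) * (a + α * a) + 0 * (α * a))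
        ((0 : ℝ) * b + a / (a + β * b) * (b + β * b) + 0 * (β * b)) =
      a * b * (1 + α) / (α * a + b) :=
  diamond_tstar_maximizes_min_cut_general a b α β ha hb hα hαβ
end

section
/- Let a, b, α, β be positive reals with α·β = 1. For every time-sharing vector t = (t1, t2, t3, t4) with ti ≥ 0 and t1 + t2 + t3 + t4 = 1, one has R_C2(t)/a + α·R_C3(t)/b = 1 + α, where R_C2(t) = t1·a + t2·(a + α·a) + t4·α·a and R_C3(t) = t1·b + t3·(b + β·b) + t4·β·b. In particular, any change of time-sharing vector that increases R_C2 strictly decreases R_C3 and vice versa. -/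
/-!
With `α * β = 1` the normalized cut rates add up coordinatewise:
`R_C2 / a = t1 + (1 + α) t2 + α t4` and `α R_C3 / b = α t1 + (1 + α) t3 + t4`, so their sum is
`(1 + α) (t1 + t2 + t3 + t4) = 1 + α`. A positive combination of two quantities that is constant
on the simplex forces them to move in opposite directions.
-/

theorem lt_of_lt_of_mul_add_mul_eq {K : Type*} [Field K] [LinearOrder K] [IsStrictOrderedRing K]
    {p q x y x' y' : K} (hp : 0 < p) (hq : 0 < q)
    (h : p * x + q * y = p * x' + q * y') (hx : x < x') : y' < y := by
  have hpos : 0 < q * (y - y') := by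
    have : q * (y - y') = p * (x' - x) := by linarith
    exact this ▸ mul_pos hp (sub_pos.2 hx)
  linarith [(pos_iff_pos_of_mul_pos hpos).mp hq]

def cutRateC2 (a α t1 t2 t4 : ℝ) : ℝ := t1 * a + t2 * (a + α * a) + t4 * (α * a)

def cutRateC3 (b β t1 t3 t4 : ℝ) : ℝ := t1 * b + t3 * (b + β * b) + t4 * (β * b)

section Tradeoff

variable {a b α β t1 t2 t3 t4 s1 s2 s3 s4 : ℝ}

theorem cutRateC2_div_add_cutRateC3_div (ha : a ≠ 0) (hb : b ≠ 0) (hαβ : α * β = 1)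
    (ht : t1 + t2 + t3 + t4 = 1) :
    cutRateC2 a α t1 t2 t4 / a + α * cutRateC3 b β t1 t3 t4 / b = 1 + α := by
  unfold cutRateC2 cutRateC3
  field_simp
  linear_combination (1 + α) * ht + (t3 + t4) * hαβ

theorem inv_mul_cutRateC2_add_div_mul_cutRateC3_eq (ha : a ≠ 0) (hb : b ≠ 0) (hαβ : α * β = 1)
    (ht : t1 + t2 + t3 + t4 = 1) (hs : s1 + s2 + s3 + s4 = 1) :
    a⁻¹ * cutRateC2 a α t1 t2 t4 + α / b * cutRateC3 b β t1 t3 t4 =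
      a⁻¹ * cutRateC2 a α s1 s2 s4 + α / b * cutRateC3 b β s1 s3 s4 := by
  simp only [← div_eq_inv_mul, ← mul_div_right_comm]
  rw [cutRateC2_div_add_cutRateC3_div ha hb hαβ ht, cutRateC2_div_add_cutRateC3_div ha hb hαβ hs]

theorem cutRateC3_lt_of_cutRateC2_lt (ha : 0 < a) (hb : 0 < b) (hα : 0 < α)
    (hαβ : α * β = 1) (ht : t1 + t2 + t3 + t4 = 1) (hs : s1 + s2 + s3 + s4 = 1)
    (hlt : cutRateC2 a α t1 t2 t4 < cutRateC2 a α s1 s2 s4) :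
    cutRateC3 b β s1 s3 s4 < cutRateC3 b β t1 t3 t4 :=
  lt_of_lt_of_mul_add_mul_eq (inv_pos.2 ha) (div_pos hα hb)
    (inv_mul_cutRateC2_add_div_mul_cutRateC3_eq ha.ne' hb.ne' hαβ ht hs) hlt

theorem cutRateC2_lt_of_cutRateC3_lt (ha : 0 < a) (hb : 0 < b) (hα : 0 < α)
    (hαβ : α * β = 1) (ht : t1 + t2 + t3 + t4 = 1) (hs : s1 + s2 + s3 + s4 = 1)
    (hlt : cutRateC3 b β t1 t3 t4 < cutRateC3 b β s1 s3 s4) :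
    cutRateC2 a α s1 s2 s4 < cutRateC2 a α t1 t2 t4 :=
  lt_of_lt_of_mul_add_mul_eq (div_pos hα hb) (inv_pos.2 ha)
    (by linarith [inv_mul_cutRateC2_add_div_mul_cutRateC3_eq (β := β) ha.ne' hb.ne' hαβ ht hs]) hlt

end Tradeoff

theorem diamond_cut_rate_tradeoff_general (a b α β : ℝ)
    (ha : 0 < a) (hb : 0 < b) (hα : 0 < α) (hαβ : α * β = 1) :
    (∀ t1 t2 t3 t4 : ℝ, 0 ≤ t1 → 0 ≤ t2 → 0 ≤ t3 → 0 ≤ t4 →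
      t1 + t2 + t3 + t4 = 1 →
      (t1 * a + t2 * (a + α * a) + t4 * (α * a)) / a +
        α * (t1 * b + t3 * (b + β * b) + t4 * (β * b)) / b = 1 + α) ∧
    (∀ t1 t2 t3 t4 s1 s2 s3 s4 : ℝ,
      0 ≤ t1 → 0 ≤ t2 → 0 ≤ t3 → 0 ≤ t4 → t1 + t2 + t3 + t4 = 1 →
      0 ≤ s1 → 0 ≤ s2 → 0 ≤ s3 → 0 ≤ s4 → s1 + s2 + s3 + s4 = 1 →
      ((t1 * a + t2 * (a + α * a) + t4 * (α * a) <
          s1 * a + s2 * (a + α * a) + s4 * (α * a) →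
        s1 * b + s3 * (b + β * b) + s4 * (β * b) <
          t1 * b + t3 * (b + β * b) + t4 * (β * b)) ∧
       (t1 * b + t3 * (b + β * b) + t4 * (β * b) <
          s1 * b + s3 * (b + β * b) + s4 * (β * b) →
        s1 * a + s2 * (a + α * a) + s4 * (α * a) <
          t1 * a + t2 * (a + α * a) + t4 * (α * a)))) :=
  ⟨fun _ _ _ _ _ _ _ _ ht => cutRateC2_div_add_cutRateC3_div ha.ne' hb.ne' hαβ ht,
    fun _ _ _ _ _ _ _ _ _ _ _ _ ht _ _ _ _ hs =>
      ⟨cutRateC3_lt_of_cutRateC2_lt ha hb hα hαβ ht hs,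
        cutRateC2_lt_of_cutRateC3_lt ha hb hα hαβ ht hs⟩⟩

/-- For α·β = 1, every time-sharing vector t in the simplex satisfies
R_C2(t)/a + α·R_C3(t)/b = 1 + α; consequently, any change of time-sharing vector that
increases R_C2 strictly decreases R_C3, and vice versa. -/
theorem diamond_cut_rate_tradeoff (a b α β : ℝ)
    (ha : 0 < a) (hb : 0 < b) (hα : 0 < α) (hβ : 0 < β) (hαβ : α * β = 1) :
    (∀ t1 t2 t3 t4 : ℝ, 0 ≤ t1 → 0 ≤ t2 → 0 ≤ t3 → 0 ≤ t4 →
      t1 + t2 + t3 + t4 = 1 →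
      (t1 * a + t2 * (a + α * a) + t4 * (α * a)) / a +
        α * (t1 * b + t3 * (b + β * b) + t4 * (β * b)) / b = 1 + α) ∧
    (∀ t1 t2 t3 t4 s1 s2 s3 s4 : ℝ,
      0 ≤ t1 → 0 ≤ t2 → 0 ≤ t3 → 0 ≤ t4 → t1 + t2 + t3 + t4 = 1 →
      0 ≤ s1 → 0 ≤ s2 → 0 ≤ s3 → 0 ≤ s4 → s1 + s2 + s3 + s4 = 1 →
      ((t1 * a + t2 * (a + α * a) + t4 * (α * a) <
          s1 * a + s2 * (a + α * a) + s4 * (α * a) →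
        s1 * b + s3 * (b + β * b) + s4 * (β * b) <
          t1 * b + t3 * (b + β * b) + t4 * (β * b)) ∧
       (t1 * b + t3 * (b + β * b) + t4 * (β * b) <
          s1 * b + s3 * (b + β * b) + s4 * (β * b) →
        s1 * a + s2 * (a + α * a) + s4 * (α * a) <
          t1 * a + t2 * (a + α * a) + t4 * (α * a)))) :=
  diamond_cut_rate_tradeoff_general a b α β ha hb hα hαβ
end

section
/- Let a, b, α, β be positive reals with α·β = 1, let C012 and C123 be arbitrary real numbers, and let t* = (0, b/(α·a + b), a/(a + β·b), 0). Then all four cut rates at t* are equal: R_C1(t*) = R_C2(t*) = R_C3(t*) = R_C4(t*) = a·b·(1 + α)/(α·a + b), where R_C1(t) = t1·C012 + t2·a + t3·b, R_C2(t) = t1·a + t2·(a + α·a) + t4·α·a, R_C3(t) = t1·b + t3·(b + β·b) + t4·β·b, and R_C4(t) = t2·α·a + t3·β·b + t4·C123. -/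
theorem div_add_mul_eq_mul_div_of_mul_eq_one {K : Type*} [Field K] {α β : K} (a b : K)
    (h : α * β = 1) : a / (a + β * b) = α * a / (α * a + b) := by
  have hden : a + β * b = β * (α * a + b) := by linear_combination (-a) * h
  rw [hden, div_mul_eq_div_div, div_eq_mul_inv a β, ← eq_inv_of_mul_eq_one_left h, mul_comm a α]

theorem diamond_all_cuts_equal_at_tstar_general (a b α β C012 C123 : ℝ) (hαβ : α * β = 1) :
    let t1 : ℝ := 0
    let t2 : ℝ := b / (α * a + b)
    let t3 : ℝ := a / (a + β * b)
    let t4 : ℝ := 0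
    t1 * C012 + t2 * a + t3 * b = a * b * (1 + α) / (α * a + b) ∧
    t1 * a + t2 * (a + α * a) + t4 * (α * a) = a * b * (1 + α) / (α * a + b) ∧
    t1 * b + t3 * (b + β * b) + t4 * (β * b) = a * b * (1 + α) / (α * a + b) ∧
    t2 * (α * a) + t3 * (β * b) + t4 * C123 = a * b * (1 + α) / (α * a + b) := by
  intro t1 t2 t3 t4
  have ht3 : t3 = α * a / (α * a + b) := div_add_mul_eq_mul_div_of_mul_eq_one a b hαβ
  rw [ht3]
  refine ⟨by ring, by ring, ?_, ?_⟩
  · linear_combination a * b / (α * a + b) * hαβ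
  · linear_combination a * b / (α * a + b) * hαβ

/-- At t* = (0, b/(α·a + b), a/(a + β·b), 0) with α·β = 1, all four
cut rates are equal to a·b·(1 + α)/(α·a + b), for any values of C012 and C123. -/
theorem diamond_all_cuts_equal_at_tstar (a b α β C012 C123 : ℝ)
    (ha : 0 < a) (hb : 0 < b) (hα : 0 < α) (hβ : 0 < β) (hαβ : α * β = 1) :
    let t1 : ℝ := 0
    let t2 : ℝ := b / (α * a + b)
    let t3 : ℝ := a / (a + β * b)
    let t4 : ℝ := 0
    t1 * C012 + t2 * a + t3 * b = a * b * (1 + α) / (α * a + b) ∧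
    t1 * a + t2 * (a + α * a) + t4 * (α * a) = a * b * (1 + α) / (α * a + b) ∧
    t1 * b + t3 * (b + β * b) + t4 * (β * b) = a * b * (1 + α) / (α * a + b) ∧
    t2 * (α * a) + t3 * (β * b) + t4 * C123 = a * b * (1 + α) / (α * a + b) :=
  diamond_all_cuts_equal_at_tstar_general a b α β C012 C123 hαβ
end

section
/- Let a, b, α, β be positive reals with α·β = 1, and let C012 and C123 be reals with C012 ≥ max(a, b) and C123 ≥ max(α·a, β·b). Then the half-duplex cut-set upper bound equals the successive-relaying rate: the supremum, over all time-sharing vectors t = (t1, t2, t3, t4) with ti ≥ 0 and t1 + t2 + t3 + t4 = 1, of min(R_C1(t), R_C2(t), R_C3(t), R_C4(t)) equals a·b·(1 + α)/(α·a + b), and this supremum is attained at t* = (0, b/(α·a + b), a/(a + β·b), 0). Here R_C1(t) = t1·C012 + t2·a + t3·b, R_C2(t) = t1·a + t2·(a + α·a) + t4·α·a, R_C3(t) = t1·b + t3·(b + β·b) + t4·β·b, and R_C4(t) = t2·α·a + t3·β·b + t4·C123. -/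
/-!
Weighting `R_C2` by `b` and `R_C3` by `α a` gives, when `α β = 1`, the identity
`b R_C2(t) + α a R_C3(t) = a b (1 + α) (t1 + t2 + t3 + t4)` for every `t`.
Hence on the simplex the smaller of these two cut rates is at most `a b (1 + α) / (α a + b)`.
Conversely, at `t* = (0, b / (α a + b), α a / (α a + b), 0)` all four cut rates equal this value.
-/

namespace DiamondRelay

variable {a b α β : ℝ}

theorem div_add_mul_eq_mul_div_mul_add (hα : α ≠ 0) (hαβ : α * β = 1) :
    a / (a + β * b) = α * a / (α * a + b) := by
  rw [← mul_div_mul_left a (a + β * b) hα, mul_add, ← mul_assoc, hαβ, one_mul]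

theorem weighted_cut_rates_eq (hαβ : α * β = 1) (t1 t2 t3 t4 : ℝ) :
    b * (t1 * a + t2 * (a + α * a) + t4 * (α * a)) +
        α * a * (t1 * b + t3 * (b + β * b) + t4 * (β * b)) =
      a * b * (1 + α) * (t1 + t2 + t3 + t4) := by
  linear_combination a * b * (t3 + t4) * hαβ

theorem le_div_of_le_of_le_of_weighted_eq {r x y p q c : ℝ} (hp : 0 ≤ p) (hq : 0 ≤ q)
    (hpq : 0 < p + q) (hx : r ≤ x) (hy : r ≤ y) (hc : p * x + q * y = c) :
    r ≤ c / (p + q) := by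
  rw [le_div_iff₀ hpq, ← hc]
  nlinarith [mul_le_mul_of_nonneg_left hx hp, mul_le_mul_of_nonneg_left hy hq]

theorem le_successive_relaying_rate_of_le_cut_rates (ha : 0 < a) (hb : 0 < b) (hα : 0 < α) (hαβ : α * β = 1)
    {r t1 t2 t3 t4 : ℝ} (ht : t1 + t2 + t3 + t4 = 1)
    (h2 : r ≤ t1 * a + t2 * (a + α * a) + t4 * (α * a))
    (h3 : r ≤ t1 * b + t3 * (b + β * b) + t4 * (β * b)) :
    r ≤ a * b * (1 + α) / (α * a + b) := by
  rw [add_comm (α * a)]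
  refine le_div_of_le_of_le_of_weighted_eq hb.le (by positivity) (by positivity) h2 h3 ?_
  rw [weighted_cut_rates_eq hαβ, ht, mul_one]

theorem cut_rates_at_optimum (hs : α * a + b ≠ 0) (hαβ : α * β = 1) :
    b / (α * a + b) * a + α * a / (α * a + b) * b = a * b * (1 + α) / (α * a + b) ∧
    b / (α * a + b) * (a + α * a) = a * b * (1 + α) / (α * a + b) ∧
    α * a / (α * a + b) * (b + β * b) = a * b * (1 + α) / (α * a + b) ∧
    b / (α * a + b) * (α * a) + α * a / (α * a + b) * (β * b) =
      a * b * (1 + α) / (α * a + b) := by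
  refine ⟨?_, ?_, ?_, ?_⟩ <;> field_simp <;> linear_combination a * b * hαβ

end DiamondRelay

open DiamondRelay in
theorem diamond_cutset_equals_RSR_general (a b α β C012 C123 : ℝ)
    (ha : 0 < a) (hb : 0 < b) (hα : 0 < α) (hαβ : α * β = 1) :
    IsGreatest
      { r : ℝ | ∃ t1 t2 t3 t4 : ℝ,
          0 ≤ t1 ∧ 0 ≤ t2 ∧ 0 ≤ t3 ∧ 0 ≤ t4 ∧ t1 + t2 + t3 + t4 = 1 ∧
          r = min (min (t1 * C012 + t2 * a + t3 * b)
                       (t1 * a + t2 * (a + α * a) + t4 * (α * a)))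
                  (min (t1 * b + t3 * (b + β * b) + t4 * (β * b))
                       (t2 * (α * a) + t3 * (β * b) + t4 * C123)) }
      (a * b * (1 + α) / (α * a + b)) ∧
    min (min ((0:ℝ) * C012 + b / (α * a + b) * a + a / (a + β * b) * b)
             ((0:ℝ) * a + b / (α * a + b) * (a + α * a) + 0 * (α * a)))
        (min ((0:ℝ) * b + a / (a + β * b) * (b + β * b) + 0 * (β * b))
             (b / (α * a + b) * (α * a) + a / (a + β * b) * (β * b) + 0 * C123)) =
      a * b * (1 + α) / (α * a + b) := by
  have hs : 0 < α * a + b := by positivity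
  obtain ⟨h1, h2, h3, h4⟩ := cut_rates_at_optimum (β := β) hs.ne' hαβ
  have hsum : b / (α * a + b) + α * a / (α * a + b) = 1 := by
    rw [← add_div, add_comm, div_self hs.ne']
  rw [div_add_mul_eq_mul_div_mul_add hα.ne' hαβ]
  refine ⟨⟨⟨0, b / (α * a + b), α * a / (α * a + b), 0, le_rfl, by positivity, by positivity,
    le_rfl, by rw [zero_add, add_zero, hsum], ?_⟩, ?_⟩, ?_⟩
  on_goal 2 =>
    rintro r ⟨t1, t2, t3, t4, -, -, -, -, ht, rfl⟩
    exact le_successive_relaying_rate_of_le_cut_rates ha hb hα hαβ ht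
      ((min_le_left _ _).trans (min_le_right _ _)) ((min_le_right _ _).trans (min_le_left _ _))
  all_goals simp only [zero_mul, zero_add, add_zero, h1, h2, h3, h4, min_self]

/-- Theorem 1, parametrized form: Under α·β = 1, with
C012 ≥ max(a, b) and C123 ≥ max(α·a, β·b), the half-duplex cut-set upper bound
(supremum over the time-sharing simplex of the minimum of the four cut rates)
equals a·b·(1 + α)/(α·a + b), and it is attained at
t* = (0, b/(α·a + b), a/(a + β·b), 0). -/
theorem diamond_cutset_equals_RSR (a b α β C012 C123 : ℝ)
    (ha : 0 < a) (hb : 0 < b) (hα : 0 < α) (hβ : 0 < β) (hαβ : α * β = 1)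
    (hC012 : max a b ≤ C012) (hC123 : max (α * a) (β * b) ≤ C123) :
    IsGreatest
      { r : ℝ | ∃ t1 t2 t3 t4 : ℝ,
          0 ≤ t1 ∧ 0 ≤ t2 ∧ 0 ≤ t3 ∧ 0 ≤ t4 ∧ t1 + t2 + t3 + t4 = 1 ∧
          r = min (min (t1 * C012 + t2 * a + t3 * b)
                       (t1 * a + t2 * (a + α * a) + t4 * (α * a)))
                  (min (t1 * b + t3 * (b + β * b) + t4 * (β * b))
                       (t2 * (α * a) + t3 * (β * b) + t4 * C123)) }
      (a * b * (1 + α) / (α * a + b)) ∧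
    min (min ((0:ℝ) * C012 + b / (α * a + b) * a + a / (a + β * b) * b)
             ((0:ℝ) * a + b / (α * a + b) * (a + α * a) + 0 * (α * a)))
        (min ((0:ℝ) * b + a / (a + β * b) * (b + β * b) + 0 * (β * b))
             (b / (α * a + b) * (α * a) + a / (a + β * b) * (β * b) + 0 * C123)) =
      a * b * (1 + α) / (α * a + b) :=
  diamond_cutset_equals_RSR_general a b α β C012 C123 ha hb hα hαβ
end

section
/- Let g01, g02, g13, g23, PS, PR1, PR2, σ1², σ2², σ3² be positive reals, and define C01 = log₂(1 + g01·PS/σ1²), C02 = log₂(1 + g02·PS/σ2²), C13 = log₂(1 + g13·PR1/σ3²), C23 = log₂(1 + g23·PR2/σ3²), C012 = log₂(1 + (g01/σ1² + g02/σ2²)·PS), and C123 = log₂(1 + (√(g13·PR1) + √(g23·PR2))²/σ3²). If C01·C02 = C13·C23, then the supremum, over all time-sharing vectors t = (t1, t2, t3, t4) with ti ≥ 0 and t1 + t2 + t3 + t4 = 1, of min(t1·C012 + t2·C02 + t3·C01, t1·C02 + t2·(C02 + C13) + t4·C13, t1·C01 + t3·(C01 + C23) + t4·C23, t2·C13 +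 t3·C23 + t4·C123) equals the successive-relaying rate R_SR = max(R1, R2), where R1 = (C01·C13 + min(C13·C23, C01·C02))/(C13 + C01) and R2 = (C02·C23 + min(C13·C23, C01·C02))/(C23 + C02). -/
open Real

/-!
Under `C01 * C02 = C13 * C23` the two successive-relaying rates coincide, both being
`(C01 * C13 + C13 * C23) / (C13 + C01)`. This is an upper bound for every time-sharing vector,
since `C01 • (cut 2) + C13 • (cut 3)` evaluates to `C01 * C13 + C13 * C23` whenever the
`tᵢ` sum to one. It is attained when the relays alternate,
`t = (0, C01, C13, 0) / (C13 + C01)`, where all four cuts carry exactly this rate.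
-/

lemma logb_two_one_add_div_pos {g P σ : ℝ} (hg : 0 < g) (hP : 0 < P) (hσ : 0 < σ) :
    0 < Real.logb 2 (1 + g * P / σ) :=
  Real.logb_pos one_lt_two (lt_add_of_pos_right 1 (by positivity))

section DiamondCutSet

variable (C01 C02 C13 C23 C012 C123 : ℝ)

/-- In state `t1` both relays listen, in `t2` only `R2` does, in `t3` only `R1`, and in `t4`
neither. -/
def diamondCutRate (t1 t2 t3 t4 : ℝ) : ℝ :=
  min (min (t1 * C012 + t2 * C02 + t3 * C01)
           (t1 * C02 + t2 * (C02 + C13) + t4 * C13))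
      (min (t1 * C01 + t3 * (C01 + C23) + t4 * C23)
           (t2 * C13 + t3 * C23 + t4 * C123))

variable {C01 C02 C13 C23}

lemma diamondCutRate_le (hC01 : 0 < C01) (hC13 : 0 < C13) (h : C01 * C02 = C13 * C23)
    {t1 t2 t3 t4 : ℝ} (hsum : t1 + t2 + t3 + t4 = 1) :
    diamondCutRate C01 C02 C13 C23 C012 C123 t1 t2 t3 t4 ≤
      (C01 * C13 + C13 * C23) / (C13 + C01) := by
  set r := diamondCutRate C01 C02 C13 C23 C012 C123 t1 t2 t3 t4
  have hr₂ : r ≤ t1 * C02 + t2 * (C02 + C13) + t4 * C13 :=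
    (min_le_left _ _).trans (min_le_right _ _)
  have hr₃ : r ≤ t1 * C01 + t3 * (C01 + C23) + t4 * C23 :=
    (min_le_right _ _).trans (min_le_left _ _)
  have hcombination : C01 * (t1 * C02 + t2 * (C02 + C13) + t4 * C13)
      + C13 * (t1 * C01 + t3 * (C01 + C23) + t4 * C23) = C01 * C13 + C13 * C23 := by
    linear_combination (C01 * C13 + C13 * C23) * hsum + (t1 + t2) * h
  rw [le_div_iff₀ (by positivity)]
  linarith [mul_le_mul_of_nonneg_left hr₂ hC01.le, mul_le_mul_of_nonneg_left hr₃ hC13.le]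

lemma diamondCutRate_alternating (hpos : C13 + C01 ≠ 0) (h : C01 * C02 = C13 * C23) :
    diamondCutRate C01 C02 C13 C23 C012 C123 0 (C01 / (C13 + C01)) (C13 / (C13 + C01)) 0 =
      (C01 * C13 + C13 * C23) / (C13 + C01) := by
  have cut₁ : 0 * C012 + C01 / (C13 + C01) * C02 + C13 / (C13 + C01) * C01
      = (C01 * C13 + C13 * C23) / (C13 + C01) := by
    field_simp
    linear_combination h
  have cut₂ : 0 * C02 + C01 / (C13 + C01) * (C02 + C13) + 0 * C13
      = (C01 * C13 + C13 * C23) / (C13 + C01) := by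
    field_simp
    linear_combination h
  have cut₃ : 0 * C01 + C13 / (C13 + C01) * (C01 + C23) + 0 * C23
      = (C01 * C13 + C13 * C23) / (C13 + C01) := by
    field_simp
    ring
  have cut₄ : C01 / (C13 + C01) * C13 + C13 / (C13 + C01) * C23 + 0 * C123
      = (C01 * C13 + C13 * C23) / (C13 + C01) := by
    field_simp
    ring
  rw [diamondCutRate, cut₁, cut₂, cut₃, cut₄, min_self, min_self]

theorem isLUB_diamondCutRate (hC01 : 0 < C01) (hC13 : 0 < C13) (h : C01 * C02 = C13 * C23) :
    IsLUB { r : ℝ | ∃ t1 t2 t3 t4 : ℝ,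
        0 ≤ t1 ∧ 0 ≤ t2 ∧ 0 ≤ t3 ∧ 0 ≤ t4 ∧ t1 + t2 + t3 + t4 = 1 ∧
        r = diamondCutRate C01 C02 C13 C23 C012 C123 t1 t2 t3 t4 }
      ((C01 * C13 + C13 * C23) / (C13 + C01)) := by
  refine ⟨?_, fun b hb => hb ?_⟩
  · rintro r ⟨t1, t2, t3, t4, -, -, -, -, hsum, rfl⟩
    exact diamondCutRate_le C012 C123 hC01 hC13 h hsum
  · have hpos : 0 < C13 + C01 := by positivity
    refine ⟨0, C01 / (C13 + C01), C13 / (C13 + C01), 0, le_rfl, by positivity, by positivity,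
      le_rfl, by field_simp; ring, ?_⟩
    exact (diamondCutRate_alternating C012 C123 hpos.ne' h).symm

end DiamondCutSet

lemma successiveRelayingRate_eq_of_mul_eq_mul {C01 C02 C13 C23 : ℝ} (h13 : C13 + C01 ≠ 0)
    (h02 : C23 + C02 ≠ 0) (h : C01 * C02 = C13 * C23) :
    (C02 * C23 + C13 * C23) / (C23 + C02) = (C01 * C13 + C13 * C23) / (C13 + C01) := by
  rw [div_eq_div_iff h02 h13]
  linear_combination (C23 - C13) * h

/-- Theorem 1, Gaussian form: In the Gaussian diamond relay channel,
if C01·C02 = C13·C23 then the half-duplex cut-set upper bound equals the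
successive-relaying rate R_SR = max(R1, R2). -/
theorem gaussian_diamond_capacity (g01 g02 g13 g23 PS PR1 PR2 σ1 σ2 σ3 : ℝ)
    (hg01 : 0 < g01) (hg02 : 0 < g02) (hg13 : 0 < g13) (hg23 : 0 < g23)
    (hPS : 0 < PS) (hPR1 : 0 < PR1) (hPR2 : 0 < PR2)
    (hσ1 : 0 < σ1) (hσ2 : 0 < σ2) (hσ3 : 0 < σ3) :
    let C01 := Real.logb 2 (1 + g01 * PS / σ1)
    let C02 := Real.logb 2 (1 + g02 * PS / σ2)
    let C13 := Real.logb 2 (1 + g13 * PR1 / σ3)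
    let C23 := Real.logb 2 (1 + g23 * PR2 / σ3)
    let C012 := Real.logb 2 (1 + (g01 / σ1 + g02 / σ2) * PS)
    let C123 := Real.logb 2 (1 + (Real.sqrt (g13 * PR1) + Real.sqrt (g23 * PR2)) ^ 2 / σ3)
    C01 * C02 = C13 * C23 →
    IsLUB
      { r : ℝ | ∃ t1 t2 t3 t4 : ℝ,
          0 ≤ t1 ∧ 0 ≤ t2 ∧ 0 ≤ t3 ∧ 0 ≤ t4 ∧ t1 + t2 + t3 + t4 = 1 ∧
          r = min (min (t1 * C012 + t2 * C02 + t3 * C01)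
                       (t1 * C02 + t2 * (C02 + C13) + t4 * C13))
                  (min (t1 * C01 + t3 * (C01 + C23) + t4 * C23)
                       (t2 * C13 + t3 * C23 + t4 * C123)) }
      (max ((C01 * C13 + min (C13 * C23) (C01 * C02)) / (C13 + C01))
           ((C02 * C23 + min (C13 * C23) (C01 * C02)) / (C23 + C02))) := by
  intro C01 C02 C13 C23 C012 C123 h
  have hC01 : 0 < C01 := logb_two_one_add_div_pos hg01 hPS hσ1
  have hC02 : 0 < C02 := logb_two_one_add_div_pos hg02 hPS hσ2
  have hC13 : 0 < C13 := logb_two_one_add_div_pos hg13 hPR1 hσ3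
  have hC23 : 0 < C23 := logb_two_one_add_div_pos hg23 hPR2 hσ3
  rw [min_eq_left h.ge, successiveRelayingRate_eq_of_mul_eq_mul (by positivity) (by positivity) h,
    max_self]
  exact isLUB_diamondCutRate C012 C123 hC01 hC13 h
end
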